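/- Let k ∈ ℕ, let f_1, …, f_k : S → ℝ be continuous, and let φ(λ) = Π_{i=1}^k ⟨f_i, λ⟩. Then for all ξ ∈ S^E and all x, y ∈ E, φ(m(ξ^{x,y})) − φ(m(ξ)) = Σ_{A ⊆ {1,…,k}, |A| ≥ 1} φ_{A^c}(m(ξ)) · π(x)^{|A|} · Δ^φ_A(ξ(y), ξ(x)). -/
import Mathlib


open MeasureTheory Finset

/-- Empirical measure `m(ξ) = ∑_{x∈E} π(x) δ_{ξ(x)}`. -/
noncomputable def empMeas {E S : Type*} [Fintype E] [MeasurableSpace S]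
    (π : E → ℝ) (ξ : E → S) : Measure S :=
  ∑ x : E, (ENNReal.ofReal (π x)) • Measure.dirac (ξ x)

lemma integral_empMeas {E S : Type*} [Fintype E]
    [MetricSpace S] [CompactSpace S] [MeasurableSpace S] [BorelSpace S]
    (π : E → ℝ) (hπ : ∀ x, 0 ≤ π x) (g : C(S, ℝ)) (ξ : E → S) :
    ∫ σ, g σ ∂(empMeas π ξ) = ∑ z, π z * g (ξ z) := by
  unfold empMeas
  rw [integral_finset_sum_measure]
  · refine Finset.sum_congr rfl fun z _ => ?_
    rw [integral_smul_measure, integral_dirac, ENNReal.toReal_ofReal (hπ z)]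
    simp [mul_comm]
  · intro z _
    haveI : IsFiniteMeasure ((ENNReal.ofReal (π z)) • Measure.dirac (ξ z)) := by
      constructor
      simp [lt_top_iff_ne_top, ENNReal.mul_ne_top]
    exact BoundedContinuousFunction.integrable _ (BoundedContinuousFunction.mkOfCompact g)

lemma integral_empMeas_update {E S : Type*} [Fintype E] [DecidableEq E]
    [MetricSpace S] [CompactSpace S] [MeasurableSpace S] [BorelSpace S]
    (π : E → ℝ) (hπ : ∀ x, 0 ≤ π x) (g : C(S, ℝ)) (ξ : E → S) (x y : E) :
    ∫ σ, g σ ∂(empMeas π (Function.update ξ x (ξ y))) =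
      (∫ σ, g σ ∂(empMeas π ξ)) + π x * (g (ξ y) - g (ξ x)) := by
  rw [integral_empMeas π hπ g, integral_empMeas π hπ g]
  have h : ∀ z : E, π z * g (Function.update ξ x (ξ y) z) =
      π z * g (ξ z) + (if z = x then π x * (g (ξ y) - g (ξ x)) else 0) := by
    intro z
    rcases eq_or_ne z x with rfl | hz
    · simp [Function.update_self]; ring
    · simp [Function.update_of_ne hz, hz]
  simp only [h, Finset.sum_add_distrib, Finset.sum_ite_eq' Finset.univ x, Finset.mem_univ,
    if_true]

/-- Equation (2.11): for `φ(λ) = ∏_{i=1}^k ⟨f_i, λ⟩` and `ξ^{x,y}` the configuration `ξ`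
with its value at `x` replaced by `ξ(y)`,
`φ(m(ξ^{x,y})) − φ(m(ξ)) = ∑_{A ⊆ {1,…,k}, |A|≥1} φ_{Aᶜ}(m(ξ)) π(x)^|A| Δ^φ_A(ξ(y),ξ(x))`. -/
theorem empirical_product_update_expansion
    {E S : Type*} [Fintype E] [DecidableEq E]
    [MetricSpace S] [CompactSpace S] [MeasurableSpace S] [BorelSpace S]
    (hE : 2 ≤ Fintype.card E)
    (π : E → ℝ) (hπpos : ∀ x, 0 < π x) (hπ1 : ∑ x, π x = 1)
    (k : ℕ) (f : Fin k → C(S, ℝ)) (ξ : E → S) (x y : E) :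
    (∏ i : Fin k, ∫ σ, f i σ ∂(empMeas π (Function.update ξ x (ξ y)))) -
        (∏ i : Fin k, ∫ σ, f i σ ∂(empMeas π ξ)) =
      ∑ A ∈ Finset.univ.powerset.filter (fun A : Finset (Fin k) => 1 ≤ A.card),
        (∏ i ∈ Aᶜ, ∫ σ, f i σ ∂(empMeas π ξ)) * π x ^ A.card *
          ∏ i ∈ A, (f i (ξ y) - f i (ξ x)) := by
  have hπ : ∀ z, 0 ≤ π z := fun z => (hπpos z).le
  set a : Fin k → ℝ := fun i => ∫ σ, f i σ ∂(empMeas π ξ) with ha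
  set d : Fin k → ℝ := fun i => π x * (f i (ξ y) - f i (ξ x)) with hd
  have h1 : (∏ i : Fin k, ∫ σ, f i σ ∂(empMeas π (Function.update ξ x (ξ y)))) =
      ∏ i : Fin k, (d i + a i) := by
    refine Finset.prod_congr rfl fun i _ => ?_
    rw [integral_empMeas_update π hπ (f i) ξ x y, add_comm]
  rw [h1, Finset.prod_add]
  have h2 : ∀ A : Finset (Fin k), (∏ i ∈ A, d i) * ∏ i ∈ Finset.univ \ A, a i =
      (∏ i ∈ Aᶜ, a i) * π x ^ A.card * ∏ i ∈ A, (f i (ξ y) - f i (ξ x)) := by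
    intro A
    rw [← Finset.compl_eq_univ_sdiff, hd]
    simp only [Finset.prod_mul_distrib, Finset.prod_const]
    ring
  rw [Finset.sum_congr rfl (fun A _ => h2 A),
    ← Finset.sum_filter_add_sum_filter_not Finset.univ.powerset
      (fun A : Finset (Fin k) => 1 ≤ A.card)]
  have h3 : Finset.univ.powerset.filter (fun A : Finset (Fin k) => ¬ 1 ≤ A.card) = {∅} := by
    ext A
    simp [Nat.lt_one_iff, Finset.card_eq_zero]
  rw [h3]
  simp [ha]
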